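/- arXiv:1711.10582 — 2 statements merged into one kernel-verified Lean document; each statement's English description precedes it below -/
import Mathlib

section
/- Let q be prime and U, N, M integers with UN < q. For fixed integers u₁ < u₂ in [1, U] with U ≤ N, the number of pairs (n₁, n₂) with M < n₁, n₂ ≤ M+N and u₁n₁ ≡ u₂n₂ (mod q) is O( N · gcd(u₁,u₂) / u₂ ). -/
set_option maxHeartbeats 1000000

open Finset

lemma spaced_card (v : ℤ) (hv : 0 < v) (M : ℤ) (N : ℕ) (T : Finset ℤ)
    (hT : ∀ n ∈ T, M < n ∧ n ≤ M + N)
    (hpair : ∀ n ∈ T, ∀ n' ∈ T, v ∣ n - n') :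
    (T.card : ℤ) * v ≤ N + v := by
  rcases T.eq_empty_or_nonempty with h | ⟨n₀, hn₀⟩
  · subst h; simp; positivity
  · set a : ℤ := (M - n₀) / v + 1 with ha
    set b : ℤ := (M + N - n₀) / v with hb
    have key : ∀ n ∈ T, (n - n₀) / v ∈ Finset.Icc a b := by
      intro n hn
      obtain ⟨h1, h2⟩ := hT n hn
      have hd : v ∣ n - n₀ := hpair n hn n₀ hn₀
      have heq : (n - n₀) / v * v = n - n₀ := Int.ediv_mul_cancel hd
      rw [Finset.mem_Icc]
      constructor
      · have hlow : (M - n₀) / v * v ≤ M - n₀ := Int.ediv_mul_le _ hv.ne'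
        have : (M - n₀) / v * v < (n - n₀) / v * v := by rw [heq]; omega
        have := lt_of_mul_lt_mul_right this hv.le
        omega
      · exact Int.ediv_le_ediv hv (by omega)
    have hinj : Set.InjOn (fun n => (n - n₀) / v) T := by
      intro n hn n' hn' hfe
      simp only [Finset.mem_coe] at hn hn'
      have e1 : (n - n₀) / v * v = n - n₀ := Int.ediv_mul_cancel (hpair n hn n₀ hn₀)
      have e2 : (n' - n₀) / v * v = n' - n₀ := Int.ediv_mul_cancel (hpair n' hn' n₀ hn₀)
      simp only at hfe
      rw [hfe] at e1
      omega
    have hcard : T.card ≤ (Finset.Icc a b).card :=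
      Finset.card_le_card_of_injOn _ key hinj
    have hab : a ≤ b := by
      have := key n₀ hn₀; rw [Finset.mem_Icc] at this; omega
    have hIcc : ((Finset.Icc a b).card : ℤ) = b - a + 1 := by
      rw [Int.card_Icc]; omega
    have h1 : (T.card : ℤ) ≤ b - a + 1 := by
      have h2 : (T.card : ℤ) ≤ ((Finset.Icc a b).card : ℤ) := Int.ofNat_le.mpr hcard
      omega
    have hb' : b * v ≤ M + N - n₀ := Int.ediv_mul_le _ hv.ne'
    have hlow : M - n₀ < ((M - n₀) / v + 1) * v := Int.lt_ediv_add_one_mul_self _ hv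
    have : (b - a + 1) * v ≤ N + v := by
      have expand : (b - a + 1) * v = b * v - ((M - n₀) / v + 1) * v + v := by rw [ha]; ring
      omega
    calc (T.card : ℤ) * v ≤ (b - a + 1) * v := by
          exact mul_le_mul_of_nonneg_right h1 hv.le
      _ ≤ N + v := this

/-- For fixed `u₁ < u₂` in `[1,U]` with `U ≤ N` and `UN < q`, the number of pairs
`M < n₁,n₂ ≤ M+N` with `u₁n₁ ≡ u₂n₂ (mod q)` is `O(N gcd(u₁,u₂)/u₂)`. -/
theorem pair_congruence_count :
    ∃ C : ℝ, 0 < C ∧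
      ∀ (q : ℕ), q.Prime →
      ∀ (U N : ℕ) (M : ℤ) (u₁ u₂ : ℕ),
        U * N < q → U ≤ N → 1 ≤ u₁ → u₁ < u₂ → u₂ ≤ U →
        (((Finset.Ioc M (M + N) ×ˢ Finset.Ioc M (M + N)).filter
            (fun x : ℤ × ℤ =>
              (((u₁ : ℤ) * x.1 : ℤ) : ZMod q) = (((u₂ : ℤ) * x.2 : ℤ) : ZMod q))).card : ℝ) ≤
          C * N * (Nat.gcd u₁ u₂ : ℝ) / u₂ := by
  refine ⟨6, by norm_num, ?_⟩
  intro q hq U N M u₁ u₂ hUNq hUN hu₁ h12 h2U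
  classical
  haveI : Fact q.Prime := ⟨hq⟩
  set S := (Finset.Ioc M (M + N) ×ˢ Finset.Ioc M (M + N)).filter
      (fun x : ℤ × ℤ =>
        (((u₁ : ℤ) * x.1 : ℤ) : ZMod q) = (((u₂ : ℤ) * x.2 : ℤ) : ZMod q)) with hS
  have hu₂ : 0 < u₂ := lt_of_le_of_lt (Nat.zero_le _) h12
  have hU : 0 < U := lt_of_lt_of_le hu₂ h2U
  have hN2 : 2 ≤ N := le_trans (le_trans (by omega) h2U) hUN
  set d := Nat.gcd u₁ u₂ with hd
  have hd0 : 0 < d := Nat.gcd_pos_of_pos_left _ (by omega)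
  set v₁ := u₁ / d with hv₁def
  set v₂ := u₂ / d with hv₂def
  have hu₁e : u₁ = d * v₁ := (Nat.mul_div_cancel' (Nat.gcd_dvd_left _ _)).symm
  have hu₂e : u₂ = d * v₂ := (Nat.mul_div_cancel' (Nat.gcd_dvd_right _ _)).symm
  have hcop : Nat.Coprime v₁ v₂ := Nat.coprime_div_gcd_div_gcd hd0
  have hv₂ : 0 < v₂ := Nat.div_pos (Nat.le_of_dvd hu₂ (Nat.gcd_dvd_right _ _)) hd0
  have hv₂N : v₂ ≤ N := le_trans (le_trans (Nat.div_le_self _ _) h2U) hUN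
  have hUq : U < q := lt_of_le_of_lt (Nat.le_mul_of_pos_right U (by omega)) hUNq
  have hqpos : 0 < q := hq.pos
  -- the key integer inequality
  have main : (S.card : ℤ) * v₂ ≤ 6 * N := by
    rcases S.eq_empty_or_nonempty with h | ⟨a, haS⟩
    · rw [h]; simp
    · rw [hS, Finset.mem_filter, Finset.mem_product] at haS
      obtain ⟨⟨ha1, ha2⟩, hacong⟩ := haS
      set Tf : ℤ → Finset ℤ := fun ε => (Finset.Ioc M (M+↑N)).filter
        (fun n => ∃ y : ℤ, (u₁ : ℤ) * (n - a.1) = u₂ * y + ε * q) with hTf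
      -- each pair in S has first coordinate in one of three classes
      have hmap : ∀ p ∈ S, p.1 ∈ ({-1,0,1} : Finset ℤ).biUnion Tf := by
        intro p hpS
        rw [hS, Finset.mem_filter, Finset.mem_product] at hpS
        obtain ⟨⟨hp1, hp2⟩, hpcong⟩ := hpS
        have hdvd : (q : ℤ) ∣ ((u₁ : ℤ) * (p.1 - a.1) - (u₂ : ℤ) * (p.2 - a.2)) := by
          rw [← ZMod.intCast_zmod_eq_zero_iff_dvd]
          push_cast
          push_cast at hpcong hacong
          linear_combination hpcong - hacong
        obtain ⟨k, hk⟩ := hdvd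
        rw [Finset.mem_Ioc] at hp1 hp2 ha1 ha2
        have hx : |p.1 - a.1| < (N : ℤ) := by rw [abs_lt]; omega
        have hy : |p.2 - a.2| < (N : ℤ) := by rw [abs_lt]; omega
        have hb1 : |(u₁ : ℤ) * (p.1 - a.1)| < (q : ℤ) := by
          rw [abs_mul, abs_of_nonneg (by positivity : (0:ℤ) ≤ (u₁:ℤ))]
          have h1 : (u₁ : ℤ) * |p.1 - a.1| ≤ (U : ℤ) * |p.1 - a.1| := by
            apply mul_le_mul_of_nonneg_right _ (abs_nonneg _)
            exact_mod_cast le_trans (le_of_lt h12) h2U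
          have h2 : (U : ℤ) * |p.1 - a.1| < (U : ℤ) * N := by
            apply mul_lt_mul_of_pos_left hx (by exact_mod_cast hU)
          have h3 : ((U : ℤ) * N : ℤ) < q := by exact_mod_cast hUNq
          linarith
        have hb2 : |(u₂ : ℤ) * (p.2 - a.2)| < (q : ℤ) := by
          rw [abs_mul, abs_of_nonneg (by positivity : (0:ℤ) ≤ (u₂:ℤ))]
          have h1 : (u₂ : ℤ) * |p.2 - a.2| ≤ (U : ℤ) * |p.2 - a.2| := by
            apply mul_le_mul_of_nonneg_right _ (abs_nonneg _)
            exact_mod_cast h2U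
          have h2 : (U : ℤ) * |p.2 - a.2| < (U : ℤ) * N := by
            apply mul_lt_mul_of_pos_left hy (by exact_mod_cast hU)
          have h3 : ((U : ℤ) * N : ℤ) < q := by exact_mod_cast hUNq
          linarith
        have hklt : |k| < 2 := by
          have habs : |(q:ℤ) * k| < 2 * q := by
            rw [← hk]
            calc |(u₁ : ℤ) * (p.1 - a.1) - (u₂ : ℤ) * (p.2 - a.2)|
                ≤ |(u₁ : ℤ) * (p.1 - a.1)| + |(u₂ : ℤ) * (p.2 - a.2)| := abs_sub _ _
              _ < 2 * q := by linarith
          rw [abs_mul, abs_of_nonneg (by positivity : (0:ℤ) ≤ (q:ℤ))] at habs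
          by_contra hcon
          push_neg at hcon
          nlinarith [hqpos]
        have hkmem : k ∈ ({-1,0,1} : Finset ℤ) := by
          simp only [Finset.mem_insert, Finset.mem_singleton]
          rw [abs_lt] at hklt; omega
        rw [Finset.mem_biUnion]
        exact ⟨k, hkmem, by
          rw [hTf]; simp only [Finset.mem_filter, Finset.mem_Ioc]
          exact ⟨⟨hp1.1, hp1.2⟩, ⟨p.2 - a.2, by linarith⟩⟩⟩
      have hinj : Set.InjOn Prod.fst (S : Set (ℤ × ℤ)) := by
        intro p hp p' hp' hfst
        simp only [Finset.mem_coe] at hp hp'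
        rw [hS, Finset.mem_filter, Finset.mem_product] at hp hp'
        obtain ⟨⟨hp1, hp2⟩, hpcong⟩ := hp
        obtain ⟨⟨hp1', hp2'⟩, hpcong'⟩ := hp'
        have hdvdm : (q : ℤ) ∣ (u₂ : ℤ) * (p'.2 - p.2) := by
          rw [← ZMod.intCast_zmod_eq_zero_iff_dvd]
          push_cast
          push_cast at hpcong hpcong'
          rw [hfst] at hpcong
          linear_combination hpcong - hpcong'
        have hqZ : Prime ((q : ℤ)) := Nat.prime_iff_prime_int.mp hq
        have hdvd2 : (q : ℤ) ∣ p'.2 - p.2 := by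
          rcases hqZ.dvd_or_dvd hdvdm with h | h
          · exfalso
            have : (q : ℤ) ≤ u₂ := Int.le_of_dvd (by exact_mod_cast hu₂) h
            have : q ≤ u₂ := by exact_mod_cast this
            omega
          · exact h
        rw [Finset.mem_Ioc] at hp2 hp2'
        obtain ⟨k, hk⟩ := hdvd2
        have hNq' : (N : ℤ) < q := by
          have : N ≤ U * N := Nat.le_mul_of_pos_left N hU
          exact_mod_cast lt_of_le_of_lt this hUNq
        have hqZ' : (0:ℤ) < q := by exact_mod_cast hqpos
        have hk0 : k = 0 := by
          by_contra hkne
          rcases lt_or_gt_of_ne hkne with h | h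
          · have h1 : k ≤ -1 := by omega
            have h2 : (q:ℤ) * k ≤ (q:ℤ) * (-1) := mul_le_mul_of_nonneg_left h1 hqZ'.le
            omega
          · have h1 : (1:ℤ) ≤ k := by omega
            have h2 : (q:ℤ) * 1 ≤ (q:ℤ) * k := mul_le_mul_of_nonneg_left h1 hqZ'.le
            omega
        rw [hk0, mul_zero] at hk
        have : p.2 = p'.2 := by omega
        exact Prod.ext hfst this
      have h1 : S.card ≤ (({-1,0,1} : Finset ℤ).biUnion Tf).card :=
        Finset.card_le_card_of_injOn Prod.fst hmap hinj
      have h2 : ∀ ε : ℤ, ((Tf ε).card : ℤ) * v₂ ≤ N + v₂ := by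
        intro ε
        apply spaced_card (v₂ : ℤ) (by exact_mod_cast hv₂) M N
        · intro n hn
          rw [hTf] at hn; simp only [Finset.mem_filter, Finset.mem_Ioc] at hn
          exact ⟨hn.1.1, hn.1.2⟩
        · intro n hn n' hn'
          rw [hTf] at hn hn'
          simp only [Finset.mem_filter, Finset.mem_Ioc] at hn hn'
          obtain ⟨_, y, hny⟩ := hn
          obtain ⟨_, y', hny'⟩ := hn'
          have hdd : (d : ℤ) * ((v₁ : ℤ) * (n - n')) = (d : ℤ) * ((v₂ : ℤ) * (y - y')) := by
            have e1 : (u₁ : ℤ) = (d : ℤ) * v₁ := by exact_mod_cast congrArg (Nat.cast : ℕ → ℤ) hu₁e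
            have e2 : (u₂ : ℤ) = (d : ℤ) * v₂ := by exact_mod_cast congrArg (Nat.cast : ℕ → ℤ) hu₂e
            have : (u₁ : ℤ) * (n - n') = (u₂ : ℤ) * (y - y') := by linarith
            rw [e1, e2] at this; linarith
          have hvv : (v₁ : ℤ) * (n - n') = (v₂ : ℤ) * (y - y') :=
            mul_left_cancel₀ (by exact_mod_cast hd0.ne' : (d : ℤ) ≠ 0) hdd
          have hcopZ : IsCoprime (v₂ : ℤ) (v₁ : ℤ) := by
            rw [Int.isCoprime_iff_gcd_eq_one, Int.gcd_natCast_natCast]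
            exact Nat.Coprime.gcd_eq_one hcop.symm
          exact hcopZ.dvd_of_dvd_mul_left ⟨y - y', hvv⟩
      have h3 : ((({-1,0,1} : Finset ℤ).biUnion Tf).card : ℤ)
          ≤ ((Tf (-1)).card : ℤ) + ((Tf 0).card : ℤ) + ((Tf 1).card : ℤ) := by
        have := Finset.card_biUnion_le (s := ({-1,0,1} : Finset ℤ)) (t := Tf)
        have hsum : ∑ ε ∈ ({-1,0,1} : Finset ℤ), (Tf ε).card
            = (Tf (-1)).card + (Tf 0).card + (Tf 1).card := by
          rw [show ({-1,0,1} : Finset ℤ) = insert (-1) (insert 0 {1}) from rfl]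
          rw [Finset.sum_insert (by decide), Finset.sum_insert (by decide),
            Finset.sum_singleton]
          ring
        rw [hsum] at this
        exact_mod_cast this
      have hc1 := h2 (-1); have hc2 := h2 0; have hc3 := h2 1
      have hS1 : (S.card : ℤ) ≤ ((({-1,0,1} : Finset ℤ).biUnion Tf).card : ℤ) := by
        exact_mod_cast h1
      have hv₂N' : (v₂ : ℤ) ≤ N := by exact_mod_cast hv₂N
      nlinarith [hv₂, hS1, h3]
  -- conclude in ℝ
  have hu₂R : (0 : ℝ) < (u₂ : ℝ) := by exact_mod_cast hu₂
  rw [div_eq_mul_inv, ← div_eq_mul_inv, le_div_iff₀ hu₂R]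
  have mR : (S.card : ℝ) * (v₂ : ℝ) ≤ 6 * N := by exact_mod_cast main
  have hu₂eR : (u₂ : ℝ) = (d : ℝ) * (v₂ : ℝ) := by exact_mod_cast congrArg (Nat.cast : ℕ → ℝ) hu₂e
  have hdR : (0 : ℝ) ≤ (d : ℝ) := by positivity
  calc (S.card : ℝ) * (u₂ : ℝ) = ((S.card : ℝ) * (v₂ : ℝ)) * (d : ℝ) := by rw [hu₂eR]; ring
    _ ≤ (6 * N) * (d : ℝ) := mul_le_mul_of_nonneg_right mR hdR
    _ = 6 * (N : ℝ) * ((Nat.gcd u₁ u₂ : ℕ) : ℝ) := by rw [hd]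
end

section
/- Fix 0 < A < 1/2 sufficiently small. For z ≥ 2 with z ≤ U^A, we have ∑_{d ∈ U_z(U)} 1/d = O( V(z) + log z + V(z) log U ), where U_z(U) = {1 ≤ d ≤ U : gcd(d, P(z)) = 1} and V(z) = ∏_{p<z}(1 − 1/p). -/
/-!
A `z`-rough `d ≤ N` is factored over the primes in `[z, N]`, so by the Euler product the sum is at
most `∏_{z ≤ p ≤ N} (1 - 1/p)⁻¹ = V(z) Q`, where `Q = ∏_{p ≤ N} (1 - 1/p)⁻¹ = ∑ 1/m` over the
`N`-smooth `m`, and it remains to show `Q = O(log N)`. By Rankin's trick, with `σ = 1 / log (8N)`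
and `M = (8N)^9`, `Q ≤ H_M + M^{-σ} ∑ m^{σ-1}`. The Euler product for `∑ m^{σ-1}` exceeds `Q` by
at most the factor `exp (8σ ∑_{p ≤ N} log p / p) ≤ e^8`, by Mertens' estimate
`∑_{p ≤ N} log p / p ≤ log N + log 4`. As `M^{-σ} = e^{-9}`, this gives `Q ≤ H_M + Q / e`.
-/

open Finset

/-- `P(z) = ∏_{p < z, p prime} p`. -/
def primorialBelowNat (z : ℕ) : ℕ := ∏ p ∈ z.primesBelow, p

/-- `V(z) = ∏_{p<z}(1-1/p)`. -/
noncomputable def mertensVNat (z : ℕ) : ℝ := ∏ p ∈ z.primesBelow, (1 - 1 / (p : ℝ))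

open Real
open scoped Nat

noncomputable def natRpowHom (c : ℝ) : ℕ →* ℝ where
  toFun n := (n : ℝ) ^ c
  map_one' := by simp
  map_mul' m n := by push_cast; exact mul_rpow m.cast_nonneg n.cast_nonneg

theorem hasSum_rpow_factoredNumbers {s : Finset ℕ} (hs : ∀ p ∈ s, p.Prime) {c : ℝ} (hc : c < 0) :
    HasSum (fun m : Nat.factoredNumbers s ↦ ((m : ℕ) : ℝ) ^ c) (∏ p ∈ s, (1 - (p : ℝ) ^ c)⁻¹) := by
  have h := (EulerProduct.summable_and_hasSum_factoredNumbers_prod_filter_prime_geometric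
    (f := natRpowHom c) (fun {p} hp ↦ ?_) s).2
  · rwa [filter_true_of_mem hs] at h
  · change ‖(p : ℝ) ^ c‖ < 1
    rw [norm_of_nonneg (rpow_nonneg (Nat.cast_nonneg _) _)]
    exact rpow_lt_one_of_one_lt_of_neg (mod_cast hp.one_lt) hc

theorem hasSum_inv_factoredNumbers {s : Finset ℕ} (hs : ∀ p ∈ s, p.Prime) :
    HasSum (fun m : Nat.factoredNumbers s ↦ ((m : ℕ) : ℝ)⁻¹) (∏ p ∈ s, (1 - (p : ℝ)⁻¹)⁻¹) := by
  simpa only [rpow_neg_one] using hasSum_rpow_factoredNumbers hs neg_one_lt_zero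

theorem one_sub_inv_natCast_pos {p : ℕ} (hp : p.Prime) : 0 < 1 - (p : ℝ)⁻¹ :=
  sub_pos.mpr (inv_lt_one_of_one_lt₀ (by exact_mod_cast hp.one_lt))

theorem log_factorial_eq_sum_primesLE (n : ℕ) :
    log (n ! : ℕ) = ∑ p ∈ Nat.primesLE n, (n !).factorization p * log p := by
  rw [log_nat_eq_sum_factorization, Finsupp.sum_of_support_subset _ _ _ (by simp)]
  intro p hp
  rw [Nat.support_factorization] at hp
  have hp' := Nat.prime_of_mem_primeFactors hp
  exact Nat.mem_primesLE.mpr ⟨hp'.dvd_factorial.mp (Nat.dvd_of_mem_primeFactors hp), hp'⟩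

theorem div_le_factorization_factorial {p : ℕ} (hp : p.Prime) (n : ℕ) :
    n / p ≤ (n !).factorization p := by
  rcases n.eq_zero_or_pos with rfl | hn
  · simp
  rw [Nat.factorization_factorial hp (b := n + 1) ((Nat.log_le_self p n).trans_lt n.lt_succ_self)]
  simpa using single_le_sum (f := fun i ↦ n / p ^ i) (fun _ _ ↦ Nat.zero_le _)
    (mem_Ico.mpr ⟨le_rfl, by omega⟩ : 1 ∈ Ico 1 (n + 1))

/-- Mertens' first theorem, upper bound. -/
theorem sum_primesLE_log_div_le (n : ℕ) :
    ∑ p ∈ Nat.primesLE n, log p / p ≤ log n + log 4 := by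
  rcases n.eq_zero_or_pos with rfl | hn
  · simpa using log_nonneg (by norm_num : (1 : ℝ) ≤ 4)
  have hn' : (0 : ℝ) < n := by exact_mod_cast hn
  have legendre : ∀ p ∈ Nat.primesLE n,
      n / p * log p ≤ ((n !).factorization p + 1) * log p := by
    intro p hmem
    have hp := Nat.prime_of_mem_primesLE hmem
    gcongr
    calc (n : ℝ) / p ≤ ((n / p : ℕ) : ℝ) + 1 := by
          rw [← Nat.floor_div_eq_div (K := ℝ)]; exact (Nat.lt_floor_add_one _).le
      _ ≤ _ := by exact_mod_cast Nat.add_le_add_right (div_le_factorization_factorial hp n) 1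
  have chebyshev : ∑ p ∈ Nat.primesLE n, log p ≤ log 4 * n := by
    rw [← Chebyshev.theta_eq_sum_primesLE_log]; exact Chebyshev.theta_le_log4_mul_x hn'.le
  have hfact : log (n ! : ℕ) ≤ n * log n := by
    rw [← log_pow]
    exact log_le_log (by exact_mod_cast n.factorial_pos) (by exact_mod_cast n.factorial_le_pow)
  suffices n * ∑ p ∈ Nat.primesLE n, log p / p ≤ n * (log n + log 4) from
    le_of_mul_le_mul_left this hn'
  calc n * ∑ p ∈ Nat.primesLE n, log p / p
      = ∑ p ∈ Nat.primesLE n, n / p * log p := by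
        rw [mul_sum]; exact sum_congr rfl fun _ _ ↦ by ring
    _ ≤ ∑ p ∈ Nat.primesLE n, ((n !).factorization p + 1) * log p := sum_le_sum legendre
    _ = log (n ! : ℕ) + ∑ p ∈ Nat.primesLE n, log p := by
        simp only [add_mul, one_mul, sum_add_distrib, log_factorial_eq_sum_primesLE]
    _ ≤ n * (log n + log 4) := by linarith

theorem inv_one_sub_le_inv_one_sub_mul_exp {a b : ℝ} (hab : a ≤ b) (hb : b ≤ 3 / 4) :
    (1 - b)⁻¹ ≤ (1 - a)⁻¹ * exp (4 * (b - a)) := by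
  have hb' : 0 < 1 - b := by linarith
  have ha' : 0 < 1 - a := by linarith
  have hratio : (b - a) / (1 - b) ≤ 4 * (b - a) := by
    rw [div_le_iff₀ hb']; nlinarith
  calc (1 - b)⁻¹ = (1 - a)⁻¹ * (1 + (b - a) / (1 - b)) := by field_simp; ring
    _ ≤ (1 - a)⁻¹ * exp (4 * (b - a)) := by
      gcongr
      linarith [add_one_le_exp (4 * (b - a))]

theorem inv_one_sub_rpow_sub_one_le {x σ : ℝ} (hx : 2 ≤ x) (hσ : 0 ≤ σ) (hσ' : σ ≤ 1 / 2)
    (hσx : σ * log x ≤ 1) :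
    (1 - x ^ (σ - 1))⁻¹ ≤ (1 - x⁻¹)⁻¹ * exp (8 * σ * (log x / x)) := by
  have hx0 : 0 < x := by linarith
  set t := σ * log x
  have ht : 0 ≤ t := mul_nonneg hσ (log_nonneg (by linarith))
  have hb : x ^ (σ - 1) = exp t * x⁻¹ := by
    rw [rpow_sub hx0, rpow_one, rpow_def_of_pos hx0, div_eq_mul_inv, mul_comm (log x)]
  have hb_le : x ^ (σ - 1) ≤ 3 / 4 := by
    have h43 : 4 / 3 ≤ √x := le_sqrt_of_sq_le (by linarith)
    calc x ^ (σ - 1) ≤ x ^ (-(1 / 2) : ℝ) :=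
          rpow_le_rpow_of_exponent_le (by linarith) (by linarith)
      _ = (√x)⁻¹ := by rw [rpow_neg hx0.le, sqrt_eq_rpow]
      _ ≤ 3 / 4 := by rw [inv_le_comm₀ (by linarith) (by norm_num)]; linarith
  have hexp : exp t - 1 ≤ 2 * t := by
    have := abs_exp_sub_one_le (x := t) (by rwa [abs_of_nonneg ht])
    rwa [abs_of_nonneg (by linarith [one_le_exp ht]), abs_of_nonneg ht] at this
  have hinv : 0 ≤ x⁻¹ := inv_nonneg.mpr hx0.le
  refine (inv_one_sub_le_inv_one_sub_mul_exp (a := x⁻¹) ?_ hb_le).trans ?_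
  · rw [hb]; exact le_mul_of_one_le_left hinv (one_le_exp ht)
  have hx1 : x⁻¹ < 1 := inv_lt_one_of_one_lt₀ (by linarith)
  refine mul_le_mul_of_nonneg_left (exp_le_exp.mpr ?_) (inv_nonneg.mpr (by linarith))
  rw [hb]
  calc 4 * (exp t * x⁻¹ - x⁻¹) = 4 * ((exp t - 1) * x⁻¹) := by ring
    _ ≤ 4 * (2 * t * x⁻¹) := by gcongr
    _ = 8 * σ * (log x / x) := by ring

theorem prod_primesLE_inv_one_sub_rpow_le {N : ℕ} {σ : ℝ} (hσ : 0 ≤ σ) (hσ' : σ ≤ 1 / 2)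
    (hσN : σ * (log N + log 4) ≤ 1) :
    ∏ p ∈ Nat.primesLE N, (1 - (p : ℝ) ^ (σ - 1))⁻¹ ≤
      exp 8 * ∏ p ∈ Nat.primesLE N, (1 - (p : ℝ)⁻¹)⁻¹ := by
  have hlog4 : 0 ≤ log 4 := log_nonneg (by norm_num)
  have hprime : ∀ p ∈ Nat.primesLE N, (2 : ℝ) ≤ p ∧ σ * log p ≤ 1 := fun p hp ↦ by
    obtain ⟨hpN, hp⟩ := Nat.mem_primesLE.mp hp
    have hp2 : (2 : ℝ) ≤ p := by exact_mod_cast hp.two_le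
    refine ⟨hp2, le_trans ?_ hσN⟩
    have : log p ≤ log N := log_le_log (by linarith) (by exact_mod_cast hpN)
    nlinarith
  calc ∏ p ∈ Nat.primesLE N, (1 - (p : ℝ) ^ (σ - 1))⁻¹
      ≤ ∏ p ∈ Nat.primesLE N, ((1 - (p : ℝ)⁻¹)⁻¹ * exp (8 * σ * (log p / p))) := by
        refine prod_le_prod (fun p hp ↦ inv_nonneg.mpr (sub_nonneg.mpr ?_))
          fun p hp ↦ inv_one_sub_rpow_sub_one_le (hprime p hp).1 hσ hσ' (hprime p hp).2
        exact (rpow_lt_one_of_one_lt_of_neg (by linarith [(hprime p hp).1]) (by linarith)).le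
    _ = exp (8 * σ * ∑ p ∈ Nat.primesLE N, log p / p) *
          ∏ p ∈ Nat.primesLE N, (1 - (p : ℝ)⁻¹)⁻¹ := by
        rw [prod_mul_distrib, ← exp_sum, ← mul_sum, mul_comm]
    _ ≤ exp 8 * ∏ p ∈ Nat.primesLE N, (1 - (p : ℝ)⁻¹)⁻¹ := by
        gcongr
        · exact prod_nonneg fun p hp ↦
            (inv_pos.mpr (one_sub_inv_natCast_pos (Nat.prime_of_mem_primesLE hp))).le
        nlinarith [sum_primesLE_log_div_le N]

theorem tsum_ite_inv_le_harmonic (s : Set ℕ) (M : ℕ) :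
    ∑' m : s, (if (m : ℕ) ≤ M then ((m : ℕ) : ℝ)⁻¹ else 0) ≤ harmonic M := by
  set head : ℕ → ℝ := fun n ↦ if n ≤ M then (n : ℝ)⁻¹ else 0
  have head_nonneg : 0 ≤ head := fun n ↦ by dsimp [head]; split_ifs <;> positivity
  rw [tsum_subtype s head, tsum_eq_sum (s := range (M + 1)) fun n hn ↦ by
    refine Set.indicator_apply_eq_zero.mpr fun _ ↦ if_neg ?_
    simpa [Nat.lt_succ_iff] using hn]
  calc ∑ n ∈ range (M + 1), s.indicator head n
      ≤ ∑ n ∈ range (M + 1), head n :=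
        sum_le_sum fun n _ ↦ Set.indicator_le_self' (fun n _ ↦ head_nonneg n) n
    _ = harmonic M := by
      rw [sum_range_succ', harmonic]
      push_cast
      simp only [head, Nat.cast_zero, inv_zero, ite_self, add_zero]
      exact sum_congr rfl fun n hn ↦ by
        rw [if_pos (mem_range.mp hn).nat_succ_le, Nat.cast_succ]

theorem inv_le_ite_inv_add_rpow {σ : ℝ} (hσ : 0 ≤ σ) {M : ℕ} (hM : 0 < M) (m : ℕ) :
    (m : ℝ)⁻¹ ≤ (if m ≤ M then (m : ℝ)⁻¹ else 0) + (M : ℝ) ^ (-σ) * (m : ℝ) ^ (σ - 1) := by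
  have hM' : (0 : ℝ) < M := by exact_mod_cast hM
  split_ifs with hmM
  · have : 0 ≤ (M : ℝ) ^ (-σ) * (m : ℝ) ^ (σ - 1) := by positivity
    linarith
  · have hm : (0 : ℝ) < m := by exact_mod_cast (hM.trans (not_le.mp hmM))
    calc (m : ℝ)⁻¹ = (m : ℝ) ^ (-σ) * (m : ℝ) ^ (σ - 1) := by
          rw [← rpow_add hm, ← rpow_neg_one]; ring_nf
      _ ≤ (M : ℝ) ^ (-σ) * (m : ℝ) ^ (σ - 1) := by
          refine mul_le_mul_of_nonneg_right ?_ (by positivity)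
          exact rpow_le_rpow_of_nonpos hM' (Nat.cast_le.mpr (not_le.mp hmM).le) (neg_nonpos.mpr hσ)
      _ = 0 + (M : ℝ) ^ (-σ) * (m : ℝ) ^ (σ - 1) := (zero_add _).symm

/-- Rankin's trick. -/
theorem tsum_inv_le_harmonic_add_rpow {s : Set ℕ} {σ : ℝ} (hσ : 0 ≤ σ) {M : ℕ} (hM : 0 < M)
    (hs : Summable fun m : s ↦ ((m : ℕ) : ℝ) ^ (σ - 1)) :
    ∑' m : s, ((m : ℕ) : ℝ)⁻¹ ≤
      harmonic M + (M : ℝ) ^ (-σ) * ∑' m : s, ((m : ℕ) : ℝ) ^ (σ - 1) := by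
  have hinv : Summable fun m : s ↦ ((m : ℕ) : ℝ)⁻¹ := by
    refine hs.of_nonneg_of_le (fun _ ↦ by positivity) fun m ↦ ?_
    rcases Nat.eq_zero_or_pos (m : ℕ) with h0 | hpos
    · rw [h0, Nat.cast_zero, inv_zero]; exact rpow_nonneg le_rfl _
    · rw [← rpow_neg_one]
      exact rpow_le_rpow_of_exponent_le (by exact_mod_cast hpos) (by linarith)
  have hhead : Summable fun m : s ↦ if (m : ℕ) ≤ M then ((m : ℕ) : ℝ)⁻¹ else 0 :=
    hinv.of_nonneg_of_le (fun _ ↦ by split_ifs <;> positivity)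
      fun _ ↦ by split_ifs <;> simp
  calc ∑' m : s, ((m : ℕ) : ℝ)⁻¹
      ≤ ∑' m : s, ((if (m : ℕ) ≤ M then ((m : ℕ) : ℝ)⁻¹ else 0)
          + (M : ℝ) ^ (-σ) * ((m : ℕ) : ℝ) ^ (σ - 1)) :=
        hinv.tsum_le_tsum (fun m ↦ inv_le_ite_inv_add_rpow hσ hM m) (hhead.add (hs.mul_left _))
    _ = ∑' m : s, (if (m : ℕ) ≤ M then ((m : ℕ) : ℝ)⁻¹ else 0)
          + (M : ℝ) ^ (-σ) * ∑' m : s, ((m : ℕ) : ℝ) ^ (σ - 1) := by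
        rw [hhead.tsum_add (hs.mul_left _), tsum_mul_left]
    _ ≤ harmonic M + (M : ℝ) ^ (-σ) * ∑' m : s, ((m : ℕ) : ℝ) ^ (σ - 1) := by
        gcongr; exact tsum_ite_inv_le_harmonic s M

theorem prod_inv_one_sub_inv_le_harmonic_add {s : Finset ℕ} (hs : ∀ p ∈ s, p.Prime) {σ : ℝ}
    (hσ : 0 ≤ σ) (hσ1 : σ < 1) {M : ℕ} (hM : 0 < M) :
    ∏ p ∈ s, (1 - (p : ℝ)⁻¹)⁻¹ ≤
      harmonic M + (M : ℝ) ^ (-σ) * ∏ p ∈ s, (1 - (p : ℝ) ^ (σ - 1))⁻¹ := by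
  have hrpow := hasSum_rpow_factoredNumbers hs (by linarith : σ - 1 < 0)
  rw [← (hasSum_inv_factoredNumbers hs).tsum_eq, ← hrpow.tsum_eq]
  exact tsum_inv_le_harmonic_add_rpow hσ hM hrpow.summable

theorem prod_primesLE_inv_one_sub_inv_le_log_eight_mul {N : ℕ} (hN : 1 ≤ N) :
    ∏ p ∈ Nat.primesLE N, (1 - (p : ℝ)⁻¹)⁻¹ ≤ 2 * (1 + 9 * log (8 * N)) := by
  set Q := ∏ p ∈ Nat.primesLE N, (1 - (p : ℝ)⁻¹)⁻¹
  have hQ : 0 ≤ Q := prod_nonneg fun p hp ↦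
    (inv_pos.mpr (one_sub_inv_natCast_pos (Nat.prime_of_mem_primesLE hp))).le
  have hlog2 := log_two_gt_d9
  have hlog8 : log 8 = 3 * log 2 := by
    rw [show (8 : ℝ) = 2 ^ 3 by norm_num, log_pow]; norm_num
  have hlog4 : log 4 = 2 * log 2 := by
    rw [show (4 : ℝ) = 2 ^ 2 by norm_num, log_pow]; norm_num
  set L := log (8 * N)
  have hL : L = log 8 + log N := log_mul (by norm_num) (by positivity)
  have hlogN : 0 ≤ log N := log_nonneg (by exact_mod_cast hN)
  set σ := L⁻¹
  have hσ : 0 ≤ σ := inv_nonneg.mpr (by linarith)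
  have hσL : σ * L = 1 := inv_mul_cancel₀ (by linarith)
  have hσ' : σ ≤ 1 / 2 := by rw [inv_le_comm₀ (by linarith) (by norm_num)]; linarith
  set M := (8 * N) ^ 9
  have hM : 0 < M := by positivity
  have hlogM : log M = 9 * L := by simp only [M, L]; push_cast; rw [log_pow]; norm_num
  have hMσ : (M : ℝ) ^ (-σ) = exp (-1) * exp (-8) := by
    rw [rpow_def_of_pos (by exact_mod_cast hM), hlogM, ← exp_add]
    congr 1
    linear_combination (-9 : ℝ) * hσL
  have hrankin := prod_inv_one_sub_inv_le_harmonic_add (s := Nat.primesLE N)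
    (fun p ↦ Nat.prime_of_mem_primesLE) hσ (by linarith) hM
  have htail := prod_primesLE_inv_one_sub_rpow_le hσ hσ' (N := N) (by nlinarith)
  have hharm : (harmonic M : ℝ) ≤ 1 + 9 * L := by linarith [harmonic_le_one_add_log M]
  have hexp8 : exp (-8) * exp 8 = 1 := by rw [← exp_add]; norm_num
  rw [hMσ] at hrankin
  nlinarith [mul_le_mul_of_nonneg_left htail (by positivity : 0 ≤ exp (-1) * exp (-8)),
    mul_le_mul_of_nonneg_right exp_neg_one_lt_half.le hQ]

theorem prod_primesLE_inv_one_sub_inv_le {N : ℕ} (hN : 1 ≤ N) :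
    ∏ p ∈ Nat.primesLE N, (1 - (p : ℝ)⁻¹)⁻¹ ≤ 40 * (1 + log N) := by
  have hlog8 : log 8 = 3 * log 2 := by
    rw [show (8 : ℝ) = 2 ^ 3 by norm_num, log_pow]; norm_num
  have h := prod_primesLE_inv_one_sub_inv_le_log_eight_mul hN
  rw [log_mul (by norm_num) (by positivity), hlog8] at h
  linarith [log_two_lt_d9, log_nonneg (by exact_mod_cast hN : (1 : ℝ) ≤ N)]

theorem mem_factoredNumbers_of_coprime_primorialBelow {N z d : ℕ} (hd : d ∈ Icc 1 N)
    (hcop : Nat.Coprime d (primorialBelowNat z)) :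
    d ∈ Nat.factoredNumbers (Nat.primesLE N \ z.primesBelow) := by
  obtain ⟨hd1, hdN⟩ := mem_Icc.mp hd
  refine Nat.mem_factoredNumbers'.mpr fun p hp hpd ↦ mem_sdiff.mpr
    ⟨Nat.mem_primesLE.mpr ⟨(Nat.le_of_dvd hd1 hpd).trans hdN, hp⟩, fun hpz ↦ ?_⟩
  exact hp.not_dvd_one (hcop ▸ Nat.dvd_gcd hpd (dvd_prod_of_mem _ hpz))

theorem prod_primesLE_sdiff_primesBelow {N z : ℕ} (hz : z ≤ N + 1) :
    ∏ p ∈ Nat.primesLE N \ z.primesBelow, (1 - (p : ℝ)⁻¹)⁻¹ =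
      mertensVNat z * ∏ p ∈ Nat.primesLE N, (1 - (p : ℝ)⁻¹)⁻¹ := by
  have hsub : z.primesBelow ⊆ Nat.primesLE N := fun p hp ↦ Nat.mem_primesLE.mpr
    ⟨by have := (Nat.mem_primesBelow.mp hp).1; omega, Nat.prime_of_mem_primesBelow hp⟩
  have hV : mertensVNat z * ∏ p ∈ z.primesBelow, (1 - (p : ℝ)⁻¹)⁻¹ = 1 := by
    rw [mertensVNat, prod_inv_distrib]
    simp only [one_div]
    exact mul_inv_cancel₀ (prod_ne_zero_iff.mpr fun p hp ↦
      (one_sub_inv_natCast_pos (Nat.prime_of_mem_primesBelow hp)).ne')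
  rw [← prod_sdiff hsub, mul_left_comm, hV, mul_one]

theorem sum_rough_inv_le {N z : ℕ} (hz : z ≤ N + 1) :
    ∑ d ∈ (Icc 1 N).filter (fun d ↦ Nat.gcd d (primorialBelowNat z) = 1), (1 : ℝ) / d ≤
      mertensVNat z * ∏ p ∈ Nat.primesLE N, (1 - (p : ℝ)⁻¹)⁻¹ := by
  classical
  set R := (Icc 1 N).filter (fun d ↦ Nat.gcd d (primorialBelowNat z) = 1)
  have hR : ∀ d ∈ R, d ∈ Nat.factoredNumbers (Nat.primesLE N \ z.primesBelow) := fun d hd ↦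
    mem_factoredNumbers_of_coprime_primorialBelow (mem_filter.mp hd).1 (mem_filter.mp hd).2
  have hEuler := hasSum_inv_factoredNumbers (s := Nat.primesLE N \ z.primesBelow) fun p hp ↦
    Nat.prime_of_mem_primesLE (mem_sdiff.mp hp).1
  rw [← prod_primesLE_sdiff_primesBelow hz, ← hEuler.tsum_eq, ← sum_subtype_of_mem _ hR]
  simp only [one_div]
  exact hEuler.summable.sum_le_tsum _ fun _ _ ↦ by positivity

theorem mertensVNat_nonneg (z : ℕ) : 0 ≤ mertensVNat z :=
  prod_nonneg fun p hp ↦ by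
    rw [one_div]; exact (one_sub_inv_natCast_pos (Nat.prime_of_mem_primesBelow hp)).le

theorem rough_harmonic_sum_general (A : ℝ) (hA : A < 1 / 2) :
    ∃ C : ℝ, 0 < C ∧
      ∀ (U : ℝ) (z : ℕ), 1 ≤ U → 2 ≤ z → (z : ℝ) ≤ U ^ A →
        ∑ d ∈ (Finset.Icc 1 ⌊U⌋₊).filter
            (fun d : ℕ => Nat.gcd d (primorialBelowNat z) = 1), (1 : ℝ) / d ≤
          C * (mertensVNat z + Real.log z + mertensVNat z * Real.log U) := by
  refine ⟨40, by norm_num, fun U z hU hz hzU ↦ ?_⟩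
  have hzU' : (z : ℝ) ≤ U :=
    hzU.trans (by simpa using rpow_le_rpow_of_exponent_le hU (by linarith : A ≤ 1))
  have hN : 1 ≤ ⌊U⌋₊ := Nat.le_floor (by simpa using hU)
  have hlogN : log ⌊U⌋₊ ≤ log U :=
    log_le_log (by exact_mod_cast hN) (Nat.floor_le (by linarith))
  have hlogz : 0 ≤ log z := log_nonneg (by exact_mod_cast (by omega : 1 ≤ z))
  have hV := mertensVNat_nonneg z
  calc _ ≤ mertensVNat z * ∏ p ∈ Nat.primesLE ⌊U⌋₊, (1 - (p : ℝ)⁻¹)⁻¹ :=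
        sum_rough_inv_le ((Nat.le_floor hzU').trans (Nat.le_succ _))
    _ ≤ mertensVNat z * (40 * (1 + log U)) := by
        gcongr; linarith [prod_primesLE_inv_one_sub_inv_le hN]
    _ ≤ 40 * (mertensVNat z + log z + mertensVNat z * log U) := by nlinarith

/-- `∑_{d ∈ U_z(U)} 1/d = O(V(z) + log z + V(z) log U)` for `z ≤ U^A`, `0 < A < 1/2`. -/
theorem rough_harmonic_sum (A : ℝ) (hA0 : 0 < A) (hA : A < 1 / 2) :
    ∃ C : ℝ, 0 < C ∧
      ∀ (U : ℝ) (z : ℕ), 1 ≤ U → 2 ≤ z → (z : ℝ) ≤ U ^ A →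
        ∑ d ∈ (Finset.Icc 1 ⌊U⌋₊).filter
            (fun d : ℕ => Nat.gcd d (primorialBelowNat z) = 1), (1 : ℝ) / d ≤
          C * (mertensVNat z + Real.log z + mertensVNat z * Real.log U) :=
  rough_harmonic_sum_general A hA
end
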